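/- Let Cov_Fib[ℓ] denote the length of the shortest cover of the length-ℓ prefix of the infinite Fibonacci word Fib. For every ℓ ≥ 5, Cov_Fib[ℓ+1] ≠ Cov_Fib[ℓ] + 1; that is, no two consecutive positions of the cover array of a Fibonacci string beyond position 5 form an arithmetic sequence with difference 1. -/
import Mathlib


section Defs

variable {α : Type*}

/-- `C` occurs in `T` at starting position `i`. -/
def OccursAt (C T : List α) (i : ℕ) : Prop :=
  i + C.length ≤ T.length ∧ (T.drop i).take C.length = C

/-- `C` is a cover of `T`: `C` occurs in `T` and every position of `T`
lies within an occurrence of `C`. -/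
def IsCover (C T : List α) : Prop :=
  (∃ i, OccursAt C T i) ∧
    ∀ q, q < T.length → ∃ i, OccursAt C T i ∧ i ≤ q ∧ q < i + C.length

/-- A border of `T` is both a prefix and a suffix of `T`. -/
def IsBorder (B T : List α) : Prop := B <+: T ∧ B <:+ T

/-- `p` is a period of `U`: `U[i] = U[i+p]` for all `0 ≤ i < |U| - p`. -/
def IsPeriod (p : ℕ) (U : List α) : Prop :=
  0 < p ∧ ∀ i, i + p < U.length → U[i]? = U[i + p]?

/-- `U` is aperiodic: its smallest period `p` satisfies `2p > |U|`
(equivalently, every period `p` of `U` satisfies `2p > |U|`). -/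
def StrAperiodic (U : List α) : Prop := ∀ p, IsPeriod p U → U.length < 2 * p

/-- A nonempty string `X` is primitive if `X = Y^t` implies `t = 1`. -/
def StrPrimitive (X : List α) : Prop :=
  X ≠ [] ∧ ∀ (Y : List α) (t : ℕ), X = (List.replicate t Y).flatten → t = 1

/-- A string is superprimitive if it has no proper cover. -/
def Superprimitive (T : List α) : Prop :=
  ¬ ∃ C : List α, IsCover C T ∧ C.length < T.length

/-- The length of the shortest cover of `T`. -/
noncomputable def covLen (T : List α) : ℕ :=
  sInf {c | ∃ C : List α, C.length = c ∧ IsCover C T}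

/-- `{a, a+p, ..., a+(t-1)p}` is a maximal arithmetic progression with
difference `p` inside the set `S`. -/
def MaxProg (S : Set ℕ) (p a t : ℕ) : Prop :=
  0 < t ∧ (∀ r, r < t → a + r * p ∈ S) ∧ (∀ b, b + p = a → b ∉ S) ∧ a + t * p ∉ S

end Defs

/-- Fibonacci strings over `Bool` (`true` = a, `false` = b):
`Fib_0 = b`, `Fib_1 = a`, `Fib_m = Fib_{m-1} Fib_{m-2}`. -/
def fibWord : ℕ → List Bool
  | 0 => [false]
  | 1 => [true]
  | (m + 2) => fibWord (m + 1) ++ fibWord m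

/-- Fibonacci numbers `F_k = |Fib_k|`: `F_0 = F_1 = 1`, `F_2 = 2`, `F_3 = 3`, ... -/
def F (k : ℕ) : ℕ := (fibWord k).length

/-- The `n`-th letter of the infinite Fibonacci word (each `Fib_m`, `m ≥ 1`,
is a prefix of the infinite word, and `F_{n+2} > n`). -/
def fibInf (n : ℕ) : Bool := (fibWord (n + 2)).getD n false

/-- The length-`ℓ` prefix `Fib[0..ℓ)` of the infinite Fibonacci word. -/
def fibPrefix (ℓ : ℕ) : List Bool := (List.range ℓ).map fibInf

/-- `Cov_Fib[ℓ]`: the length of the shortest cover of `Fib[0..ℓ)`. -/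
noncomputable def covFib (ℓ : ℕ) : ℕ := covLen (fibPrefix ℓ)

-- basics
lemma F_add_two (k : ℕ) : F (k+2) = F (k+1) + F k := by
  simp [F, fibWord]

lemma F_pos (k : ℕ) : 1 ≤ F k := by
  induction k using Nat.twoStepInduction with
  | zero => decide
  | one => decide
  | more k ih _ => rw [F_add_two]; omega

lemma F_mono : Monotone F := by
  refine monotone_nat_of_le_succ ?_
  intro k
  match k with
  | 0 => decide
  | (n+1) => rw [F_add_two]; have := F_pos n; omega

lemma F_strict (k : ℕ) : F (k+1) < F (k+2) := by
  rw [F_add_two]; have := F_pos k; omega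

lemma F_lt_of_lt {a b : ℕ} (h : a + 1 ≤ b) (ha : 1 ≤ a) : F a < F b := by
  calc F a < F (a+1) := by
        match a, ha with
        | (n+1), _ => exact F_strict n
       _ ≤ F b := F_mono h

lemma le_F (k : ℕ) : k ≤ F (k+1) := by
  induction k using Nat.twoStepInduction with
  | zero => decide
  | one => decide
  | more k ih _ => rw [F_add_two]; have := F_pos (k+1); omega

lemma fibWord_prefix_succ (k : ℕ) (hk : 1 ≤ k) : fibWord k <+: fibWord (k+1) := by
  match k, hk with
  | (n+1), _ => rw [show n+1+1 = n+2 from rfl, fibWord]; exact List.prefix_append _ _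

lemma fibWord_prefix {a b : ℕ} (ha : 1 ≤ a) (hab : a ≤ b) : fibWord a <+: fibWord b := by
  induction b with
  | zero => omega
  | succ n ih =>
    rcases Nat.lt_or_ge a (n+1) with h | h
    · exact (ih (by omega)).trans (fibWord_prefix_succ n (by omega))
    · have : a = n+1 := by omega
      subst this; exact List.prefix_refl _

lemma getD_of_prefix {l₁ l₂ : List Bool} (h : l₁ <+: l₂) {n : ℕ} (hn : n < l₁.length) :
    l₂.getD n false = l₁.getD n false := by
  obtain ⟨t, rfl⟩ := h
  rw [List.getD_append _ _ _ _ hn]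

lemma fibInf_word {K n : ℕ} (hK : 1 ≤ K) (hn : n < F K) :
    (fibWord K).getD n false = fibInf n := by
  unfold fibInf
  rcases Nat.le_total K (n+2) with h | h
  · exact (getD_of_prefix (fibWord_prefix hK h) hn).symm
  · have h1 : n + 1 ≤ F (n+2) := le_F (n+1)
    exact getD_of_prefix (fibWord_prefix (by omega) h)
      (by have h2 : F (n+2) = (fibWord (n+2)).length := rfl; omega)
lemma length_fibWord (k : ℕ) : (fibWord k).length = F k := rfl

lemma nearcomm : ∀ k j, j + 3 ≤ F (k+2) →
    (fibWord (k+1) ++ fibWord k).getD j false = (fibWord k ++ fibWord (k+1)).getD j false := by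
  intro k
  induction k using Nat.twoStepInduction with
  | zero => intro j hj; have : F (0+2) = 2 := rfl; omega
  | one => intro j hj
           have : F (1+2) = 3 := rfl
           have hj0 : j = 0 := by omega
           subst hj0; decide
  | more k ih ih1 =>
    intro j hj
    have hj' : j + 3 ≤ F (k+4) := hj
    have e4 : F (k+4) = F (k+3) + F (k+2) := F_add_two _
    have e3' : F (k+3) = F (k+2) + F (k+1) := F_add_two _
    show (fibWord (k+3) ++ fibWord (k+2)).getD j false
        = (fibWord (k+2) ++ fibWord (k+3)).getD j false
    have e3 : fibWord (k+3) = fibWord (k+2) ++ fibWord (k+1) := rfl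
    have goalEq : (fibWord (k+3) ++ fibWord (k+2))
        = fibWord (k+2) ++ (fibWord (k+1) ++ fibWord (k+2)) := by
      rw [e3, List.append_assoc]
    have goalEq2 : (fibWord (k+2) ++ fibWord (k+3))
        = fibWord (k+2) ++ (fibWord (k+2) ++ fibWord (k+1)) := by rw [e3]
    rw [goalEq, goalEq2]
    rcases Nat.lt_or_ge j (F (k+2)) with h | h
    · have h1 : j < (fibWord (k+2)).length := h
      rw [List.getD_append _ _ _ _ h1, List.getD_append _ _ _ _ h1]
    · have h1 : (fibWord (k+2)).length ≤ j := h
      rw [List.getD_append_right _ _ _ _ h1, List.getD_append_right _ _ _ _ h1]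
      have hlen : (fibWord (k+2)).length = F (k+2) := rfl
      rw [hlen]
      exact (ih1 (j - F (k+2)) (by have hA : F (k+1+2) = F (k+3) := rfl; omega)).symm

lemma period (m x : ℕ) (h : x + F (m+1) + 3 ≤ F (m+3)) :
    fibInf x = fibInf (x + F (m+1)) := by
  have e3 : F (m+3) = F (m+2) + F (m+1) := F_add_two _
  have e2 : F (m+2) = F (m+1) + F m := F_add_two _
  have hx3 : x < F (m+3) := by omega
  have hx2 : x + F (m+1) < F (m+3) := by omega
  have w3 : fibWord (m+3) = fibWord (m+2) ++ fibWord (m+1) := rfl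
  have w2 : fibWord (m+2) = fibWord (m+1) ++ fibWord m := rfl
  rw [← fibInf_word (K := m+3) (by omega) hx3, ← fibInf_word (K := m+3) (by omega) hx2]
  have wassoc : fibWord (m+3) = fibWord (m+1) ++ (fibWord m ++ fibWord (m+1)) := by
    rw [w3, w2, List.append_assoc]
  conv_rhs => rw [wassoc]
  rw [List.getD_append_right _ _ _ _ (by rw [length_fibWord]; omega), length_fibWord,
    Nat.add_sub_cancel]
  conv_lhs => rw [w3]
  rw [List.getD_append _ _ _ _ (by rw [length_fibWord]; omega), w2]
  exact nearcomm m x (by omega)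

lemma sl (k : ℕ) : fibInf (F (k+4) - 2) = fibInf (F (k+2) - 2) := by
  have e4 : F (k+4) = F (k+3) + F (k+2) := F_add_two _
  have h2 : 2 ≤ F (k+2) := by have : F 2 ≤ F (k+2) := F_mono (by omega); have : F 2 = 2 := rfl; omega
  have h4 : 2 ≤ F (k+4) := by omega
  rw [← fibInf_word (K := k+4) (by omega) (by omega),
      ← fibInf_word (K := k+2) (by omega) (by omega)]
  have w4 : fibWord (k+4) = fibWord (k+3) ++ fibWord (k+2) := rfl
  rw [w4, List.getD_append_right _ _ _ _ (by rw [length_fibWord]; omega), length_fibWord]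
  congr 1
  omega

lemma mism : ∀ k, fibInf (F (k+2) - 2) ≠ fibInf (F (k+3) - 2) := by
  intro k
  induction k using Nat.twoStepInduction with
  | zero => decide
  | one => decide
  | more k ih _ =>
    rw [show k+2+2 = k+4 from rfl, show k+2+3 = k+5 from rfl, sl k, show k+5 = k+1+4 from rfl,
      sl (k+1)]
    exact ih
lemma F_ge_self : ∀ m, m ≤ F m := by
  intro m
  induction m using Nat.twoStepInduction with
  | zero => decide
  | one => decide
  | more k ih ih1 =>
    have := F_add_two k
    have := F_pos k
    omega

lemma exists_top : ∀ p, 1 ≤ p → ∃ m, 1 ≤ m ∧ F m ≤ p ∧ p < F (m+1) := by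
  intro p
  induction p with
  | zero => omega
  | succ n ih =>
    intro _
    rcases Nat.eq_zero_or_pos n with h0 | h0
    · subst h0
      exact ⟨1, by omega, by have : F 1 = 1 := rfl; omega, by have : F (1+1) = 2 := rfl; omega⟩
    · obtain ⟨m, h1, h2, h3⟩ := ih h0
      rcases Nat.lt_or_ge (n+1) (F (m+1)) with h | h
      · exact ⟨m, h1, by omega, h⟩
      · have heq : n + 1 = F (m+1) := by omega
        exact ⟨m+1, by omega, by omega, by have := F_strict m; have e : F (m+1+1) = F (m+2) := rfl; omega⟩

/-- Zeckendorf-style predicate: `p` is a sum of distinct, pairwise non-consecutive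
Fibonacci numbers `F i` with all indices `i ≥ k+1`. (Greedy/largest-first form.) -/
inductive Zg (k : ℕ) : ℕ → Prop
  | zero : Zg k 0
  | cons (m q : ℕ) : k ≤ m → q < F m → Zg k q → Zg k (F (m+1) + q)

lemma Zg_pos {k p : ℕ} (h : Zg k p) : p = 0 ∨ F (k+1) ≤ p := by
  cases h with
  | zero => left; rfl
  | cons m q hkm hq hz =>
    right
    have : F (k+1) ≤ F (m+1) := F_mono (by omega)
    omega

lemma Zg_mono {k j p : ℕ} (h : Zg k p) (hjk : j ≤ k) : Zg j p := by
  induction h with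
  | zero => exact (Zg.zero : Zg j 0)
  | cons m q hkm hq hz ih => exact Zg.cons m q (by omega) hq ih

lemma Zg_inv {k p : ℕ} (h : Zg k p) (hp : 0 < p) :
    ∃ m q, p = F (m+1) + q ∧ k ≤ m ∧ q < F m ∧ Zg k q ∧ F (m+1) ≤ p ∧ p < F (m+2) := by
  cases h with
  | zero => omega
  | cons m q hkm hq hz =>
    refine ⟨m, q, rfl, hkm, hq, hz, by omega, ?_⟩
    have : F (m+2) = F (m+1) + F m := F_add_two m
    omega

/-- pin down the top Fibonacci part by size -/
lemma Zg_top_eq {a b : ℕ} (h1 : F (a+1) ≤ x) (h2 : x < F (a+2)) (h3 : F (b+1) ≤ x)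
    (h4 : x < F (b+2)) : a = b := by
  by_contra hne
  rcases Nat.lt_or_ge a b with h | h
  · have : F (a+2) ≤ F (b+1) := F_mono (by omega)
    omega
  · have hba : b < a := by omega
    have : F (b+2) ≤ F (a+1) := F_mono (by omega)
    omega

lemma Zg_add {k : ℕ} : ∀ {p : ℕ}, Zg (k+1) p → Zg k (p + F (k+1)) := by
  intro p h
  induction h with
  | zero =>
    have : Zg k (F (k+1) + 0) := Zg.cons k 0 (le_refl k) (F_pos k) ((Zg.zero : Zg k 0))
    simpa using this
  | cons m q hkm hq hz ih =>
    -- here k' = k+1; p = F (m+1) + q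
    rcases Nat.lt_or_ge (q + F (k+1)) (F m) with hlt | hge
    · have : Zg k (F (m+1) + (q + F (k+1))) := Zg.cons m _ (by omega) hlt ih
      rw [show F (m+1) + (q + F (k+1)) = F (m+1) + q + F (k+1) from by omega] at this
      exact this
    · -- q must be 0 and m = k+1, or m ≥ k+2 and we merge
      rcases Nat.lt_or_ge m (k+2) with hm | hm
      · -- m = k+1, q < F (k+1) and Zg (k+1) q forces q = 0
        have hmeq : m = k+1 := by omega
        subst hmeq
        have hq0 : q = 0 := by
          rcases Zg_pos hz with h0 | h0
          · exact h0
          · have : F (k+2) ≤ F (k+1) := le_trans h0 (by omega)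
            have := F_strict k
            omega
        subst hq0
        have e : F (k+3) = F (k+2) + F (k+1) := F_add_two (k+1)
        have : Zg k (F (k+3) + 0) := Zg.cons (k+2) 0 (by omega) (F_pos _) ((Zg.zero : Zg k 0))
        rw [show F (k+3) + 0 = F (k+2) + 0 + F (k+1) from by omega] at this
        exact this
      · -- m ≥ k+2 : q + F (k+1) < F (m+1); use inversion to find its top, which must be F m
        have hub : q + F (k+1) < F (m+1) := by
          have h1 : F (k+1) ≤ F (m-1) := F_mono (by omega)
          have h2 : F (m+1) = F m + F (m-1) := by
            have := F_add_two (m-1)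
            rw [show m-1+2 = m+1 from by omega, show m-1+1 = m from by omega] at this
            exact this
          omega
        obtain ⟨m', r, heq, hkm', hr, hzr, hb1, hb2⟩ := Zg_inv ih (by have := F_pos (k+1); omega)
        have hm'm : m' + 1 = m := by
          have : m' = m - 1 := Zg_top_eq (x := q + F (k+1)) hb1 hb2
            (by rw [show m-1+1 = m from by omega]; exact hge)
            (by rw [show m-1+2 = m+1 from by omega]; exact hub)
          omega
        have e2 : F (m+2) = F (m+1) + F m := F_add_two m
        have : Zg k (F (m+2) + r) := Zg.cons (m+1) r (by omega)
          (by have : F m' ≤ F (m+1) := F_mono (by omega); omega) hzr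
        rw [show F (m+2) + r = F (m+1) + q + F (k+1) from by
          have hm2 : F (m'+1) = F m := by rw [hm'm]
          omega] at this
        exact this

lemma Zg_succ {k : ℕ} : ∀ {p : ℕ}, Zg k p →
    ∃ s, (s = F k ∨ s = F (k+1)) ∧ 0 < s ∧ Zg k (p + s) := by
  intro p h
  induction h with
  | zero =>
    refine ⟨F (k+1), Or.inr rfl, F_pos _, ?_⟩
    have : Zg k (F (k+1) + 0) := Zg.cons k 0 (le_refl k) (F_pos k) ((Zg.zero : Zg k 0))
    simpa using this
  | cons m q hkm hq hz ih =>
    rcases Nat.eq_zero_or_pos q with hq0 | hqpos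
    · subst hq0
      -- p = F (m+1)
      rcases Nat.lt_or_ge m (k+1) with hm | hm
      · -- m = k
        have hmeq : m = k := by omega
        refine ⟨F k, Or.inl rfl, F_pos _, ?_⟩
        have e : F (m+2) = F (m+1) + F m := F_add_two m
        have em : F m = F k := by rw [hmeq]
        have : Zg k (F (m+2) + 0) := Zg.cons (m+1) 0 (by omega) (F_pos _) (Zg.zero : Zg k 0)
        rw [show F (m+2) + 0 = F (m+1) + 0 + F k from by omega] at this
        exact this
      · rcases Nat.lt_or_ge m (k+2) with hm2 | hm2
        · -- m = k+1
          have hmeq : m = k+1 := by omega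
          refine ⟨F (k+1), Or.inr rfl, F_pos _, ?_⟩
          have e : F (m+2) = F (m+1) + F m := F_add_two m
          have em : F m = F (k+1) := by rw [hmeq]
          have : Zg k (F (m+2) + 0) := Zg.cons (m+1) 0 (by omega) (F_pos _) (Zg.zero : Zg k 0)
          rw [show F (m+2) + 0 = F (m+1) + 0 + F (k+1) from by omega] at this
          exact this
        · -- m ≥ k+2
          refine ⟨F (k+1), Or.inr rfl, F_pos _, ?_⟩
          have hlt : F (k+1) < F m := F_lt_of_lt (by omega) (by omega)
          have inner : Zg k (F (k+1) + 0) := Zg.cons k 0 (le_refl k) (F_pos k) ((Zg.zero : Zg k 0))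
          have : Zg k (F (m+1) + (F (k+1) + 0)) := Zg.cons m _ (by omega)
            (by omega) inner
          rw [show F (m+1) + (F (k+1) + 0) = F (m+1) + 0 + F (k+1) from by omega] at this
          exact this
    · -- q > 0
      obtain ⟨s, hsor, hspos, hzs⟩ := ih
      have hqF : F (k+1) ≤ q := by
        rcases Zg_pos hz with h0 | h0
        · omega
        · exact h0
      have hmk2 : k + 2 ≤ m := by
        by_contra hc
        push_neg at hc
        have : F m ≤ F (k+1) := F_mono (by omega)
        omega
      rcases Nat.lt_or_ge (q + s) (F m) with hlt | hge
      · refine ⟨s, hsor, hspos, ?_⟩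
        have : Zg k (F (m+1) + (q + s)) := Zg.cons m _ hkm hlt hzs
        rw [show F (m+1) + (q + s) = F (m+1) + q + s from by omega] at this
        exact this
      · refine ⟨s, hsor, hspos, ?_⟩
        have hub : q + s < F (m+1) := by
          have h1 : s ≤ F (k+1) := by
            rcases hsor with h | h
            · have : F k ≤ F (k+1) := F_mono (by omega); omega
            · omega
          have h2 : F (k+1) ≤ F (m-1) := F_mono (by omega)
          have h3 : F (m+1) = F m + F (m-1) := by
            have := F_add_two (m-1)
            rw [show m-1+2 = m+1 from by omega, show m-1+1 = m from by omega] at this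
            exact this
          omega
        obtain ⟨m', r, heq, hkm', hr, hzr, hb1, hb2⟩ := Zg_inv hzs (by omega)
        have hm'm : m' + 1 = m := by
          have : m' = m - 1 := Zg_top_eq (x := q + s) hb1 hb2
            (by rw [show m-1+1 = m from by omega]; exact hge)
            (by rw [show m-1+2 = m+1 from by omega]; exact hub)
          omega
        have e2 : F (m+2) = F (m+1) + F m := F_add_two m
        have : Zg k (F (m+2) + r) := Zg.cons (m+1) r (by omega)
          (by have : F m' ≤ F (m+1) := F_mono (by omega); omega) hzr
        rw [show F (m+2) + r = F (m+1) + q + s from by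
          have hm2 : F (m'+1) = F m := by rw [hm'm]
          omega] at this
        exact this
/-- `fibPrefix c` occurs at position `p` in the infinite Fibonacci word. -/
def occ (c p : ℕ) : Prop := ∀ i, i < c → fibInf (p + i) = fibInf i

lemma occ_mono {c c' p : ℕ} (h : occ c p) (hc : c' ≤ c) : occ c' p :=
  fun i hi => h i (by omega)

lemma occ_shift {m p c : ℕ} (h1 : F (m+1) ≤ p) (hub : p + c + 2 ≤ F (m+3)) :
    occ c p ↔ occ c (p - F (m+1)) := by
  have key : ∀ i, i < c → fibInf (p + i) = fibInf (p - F (m+1) + i) := by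
    intro i hi
    have hp := period m (p - F (m+1) + i) (by omega)
    rw [show p - F (m+1) + i + F (m+1) = p + i from by omega] at hp
    exact hp.symm
  constructor
  · intro h i hi; rw [← key i hi]; exact h i hi
  · intro h i hi; rw [key i hi]; exact h i hi

lemma Zg_occ {k p : ℕ} (hz : Zg k p) (hk : 2 ≤ k) :
    ∀ c, c + 2 ≤ F (k+2) → occ c p := by
  induction hz with
  | zero =>
    intro c _ i hi
    rw [Nat.zero_add]
  | cons m q hkm hq hzq ih =>
    intro c hc
    rcases Nat.lt_or_ge m (k+1) with hm | hm
    · -- m = k, q = 0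
      have hmeq : m = k := by omega
      have hq0 : q = 0 := by
        rcases Zg_pos hzq with h0 | h0
        · exact h0
        · have : F (k+1) ≤ F m := le_trans h0 (by omega)
          have : F m < F (k+1) := by
            have := F_mono (show m ≤ k from by omega)
            have := F_lt_of_lt (show k + 1 ≤ k+1 from le_rfl) (by omega)
            have hkk : F k < F (k+1) := F_lt_of_lt (by omega) (by omega)
            omega
          omega
      subst hq0
      intro i hi
      have hper := period m i (by
        have e1 : F (m+3) = F (m+2) + F (m+1) := F_add_two (m+1)
        have e2 : F (m+2) = F (k+2) := by rw [hmeq]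
        have : F (m+1) ≤ F (m+2) := F_mono (by omega)
        omega)
      rw [show F (m+1) + 0 + i = i + F (m+1) from by omega]
      exact hper.symm
    · -- m ≥ k+1 : descent
      have hih := ih c hc
      have hFk2 : F (k+2) ≤ F (m+1) := F_mono (by omega)
      have e2 : F (m+2) = F (m+1) + F m := F_add_two m
      have e3 : F (m+3) = F (m+2) + F (m+1) := F_add_two (m+1)
      have hs := occ_shift (m := m) (p := F (m+1) + q) (c := c) (by omega) (by omega)
      rw [hs, show F (m+1) + q - F (m+1) = q from by omega]
      exact hih

lemma occ_Zg : ∀ k, 2 ≤ k → ∀ c p, c + 1 = F (k+1) → occ c p → Zg k p := by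
  intro k hk
  induction k, hk using Nat.le_induction with
  | base =>
    intro c p hc
    have hF3 : F (2+1) = 3 := rfl
    have hc2 : c = 2 := by omega
    subst hc2
    clear hc
    induction p using Nat.strong_induction_on with
    | _ p ih =>
      intro hocc
      rcases Nat.eq_zero_or_pos p with h0 | h0
      · subst h0; exact Zg.zero
      rcases Nat.lt_or_ge p 5 with h5 | h5
      · interval_cases p
        · exact absurd (by simpa using hocc 0 (by omega)) (by decide)
        · exact absurd (by simpa using hocc 1 (by omega)) (by decide)
        · have : Zg 2 (F (2+1) + 0) := Zg.cons 2 0 le_rfl (F_pos 2) Zg.zero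
          rw [show F (2+1) + 0 = 3 from by decide] at this
          exact this
        · exact absurd (by simpa using hocc 0 (by omega)) (by decide)
      · obtain ⟨m, hm1, hm2, hm3⟩ := exists_top p (by omega)
        have hm4 : 4 ≤ m := by
          by_contra hcon
          push_neg at hcon
          have : F (m+1) ≤ F 4 := F_mono (by omega)
          have : F 4 = 5 := rfl
          omega
        obtain ⟨m', rfl⟩ : ∃ m', m = m' + 1 := ⟨m - 1, by omega⟩
        have hnorm : F (m'+1+1) = F (m'+2) := rfl
        have hF3' : 3 ≤ F (m'+1) := by
          have : F 3 ≤ F (m'+1) := F_mono (by omega)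
          have : F 3 = 3 := rfl
          omega
        have e3 : F (m'+3) = F (m'+2) + F (m'+1) := F_add_two (m'+1)
        have e2 : F (m'+2) = F (m'+1) + F m' := F_add_two m'
        have hs := occ_shift (m := m') (p := p) (c := 2) hm2 (by omega)
        have hocc' := hs.mp hocc
        have hzrec := ih (p - F (m'+1)) (by have := F_pos (m'+1); omega) hocc'
        have : Zg 2 (F (m'+1) + (p - F (m'+1))) := Zg.cons m' _ (by omega) (by omega) hzrec
        rw [show F (m'+1) + (p - F (m'+1)) = p from by omega] at this
        exact this
  | succ k hk2 ihk =>
    intro c p hc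
    have hcF : F (k+1) ≤ c := by
      have h1 : F (k+1) < F (k+2) := F_strict k
      have : F (k+1+1) = F (k+2) := rfl
      omega
    induction p using Nat.strong_induction_on with
    | _ p ih =>
      intro hocc
      rcases Nat.eq_zero_or_pos p with h0 | h0
      · subst h0; exact Zg.zero
      rcases Nat.lt_or_ge p (F (k+3)) with hsm | hbig
      · -- p = F (k+1) refuted, or p = F (k+2)
        have hocc' : occ (F (k+1) - 1) p := occ_mono hocc (by omega)
        have hzk : Zg k p := ihk (F (k+1) - 1) p (by have := F_pos (k+1); omega) hocc'
        obtain ⟨m, r, heq, hkm, hr, hzr, hb1, hb2⟩ := Zg_inv hzk h0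
        have hm : m ≤ k + 1 := by
          by_contra hcon
          push_neg at hcon
          have : F (k+3) ≤ F (m+1) := F_mono (by omega)
          omega
        have hr0 : r = 0 := by
          rcases Zg_pos hzr with h | h
          · exact h
          · have : F m ≤ F (k+1) := F_mono (by omega)
            omega
        subst hr0
        rcases Nat.lt_or_ge m (k+1) with hmk | hmk
        · -- m = k : p = F (k+1) : mismatch
          exfalso
          have hmeq : m = k := by omega
          have h2F : 2 ≤ F (k+2) := by
            have : F 2 ≤ F (k+2) := F_mono (by omega)
            have : F 2 = 2 := rfl
            omega
          have hmi := hocc (F (k+2) - 2) (by have : F (k+1+1) = F (k+2) := rfl; omega)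
          rw [heq, hmeq] at hmi
          rw [show F (k+1) + 0 + (F (k+2) - 2) = F (k+3) - 2 from by
            have h1 := F_add_two (k+1)
            have h2 : F (k+1+2) = F (k+3) := rfl
            have h3 : F (k+1+1) = F (k+2) := rfl
            omega] at hmi
          exact mism k hmi.symm
        · -- m = k+1 : p = F (k+2)
          have hmeq : m = k + 1 := by omega
          rw [heq]
          exact Zg.cons m 0 (by omega) (F_pos m) Zg.zero
      · obtain ⟨m, hm1, hm2, hm3⟩ := exists_top p (by omega)
        have hm4 : k + 3 ≤ m := by
          by_contra hcon
          push_neg at hcon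
          have : F (m+1) ≤ F (k+3) := F_mono (by omega)
          omega
        obtain ⟨m', rfl⟩ : ∃ m', m = m' + 1 := ⟨m - 1, by omega⟩
        have hnorm : F (m'+1+1) = F (m'+2) := rfl
        have e3 : F (m'+3) = F (m'+2) + F (m'+1) := F_add_two (m'+1)
        have e3' : F (m'+1+2) = F (m'+3) := rfl
        have e2 : F (m'+2) = F (m'+1) + F m' := F_add_two m'
        have hFc : F (k+2) ≤ F (m'+1) := F_mono (by omega)
        have hcc : F (k+1+1) = F (k+2) := rfl
        have hs := occ_shift (m := m') (p := p) (c := c) hm2 (by omega)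
        have hocc' := hs.mp hocc
        have hzrec := ih (p - F (m'+1)) (by have := F_pos (m'+1); omega) hocc'
        have : Zg (k+1) (F (m'+1) + (p - F (m'+1))) := Zg.cons m' _ (by omega) (by omega) hzrec
        rw [show F (m'+1) + (p - F (m'+1)) = p from by omega] at this
        exact this
lemma fibPrefix_length (m : ℕ) : (fibPrefix m).length = m := by simp [fibPrefix]

lemma fibPrefix_take {c m : ℕ} (h : c ≤ m) : (fibPrefix m).take c = fibPrefix c := by
  simp [fibPrefix, ← List.map_take, List.take_range, Nat.min_eq_left h]

lemma drop_take_eq {i c m : ℕ} (h : i + c ≤ m) :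
    ((fibPrefix m).drop i).take c = (List.range c).map (fun j => fibInf (i + j)) := by
  apply List.ext_getElem
  · simp [fibPrefix]; omega
  · intro j h1 h2
    simp only [fibPrefix, List.getElem_take, List.getElem_drop, List.getElem_map,
      List.getElem_range]

lemma occursAt_iff {c m i : ℕ} (h : i + c ≤ m) :
    OccursAt (fibPrefix c) (fibPrefix m) i ↔ occ c i := by
  unfold OccursAt
  rw [fibPrefix_length, fibPrefix_length, drop_take_eq h]
  constructor
  · rintro ⟨-, heq⟩ j hj
    have h1 : ((List.range c).map (fun j => fibInf (i + j)))[j]'(by simpa using hj)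
        = (fibPrefix c)[j]'(by rw [fibPrefix_length]; exact hj) := by
      congr 1
    simpa [fibPrefix] using h1
  · intro hocc
    refine ⟨h, ?_⟩
    apply List.ext_getElem
    · simp [fibPrefix]
    · intro j h1 h2
      simp only [fibPrefix, List.getElem_map, List.getElem_range]
      exact hocc j (by simpa using h1)

lemma isCover_self (T : List Bool) : IsCover T T := by
  have h0 : OccursAt T T 0 := ⟨by omega, by simp⟩
  exact ⟨⟨0, h0⟩, fun q hq => ⟨0, h0, by omega, by omega⟩⟩

lemma covFib_nonempty (m : ℕ) :
    {c | ∃ C : List Bool, C.length = c ∧ IsCover C (fibPrefix m)}.Nonempty :=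
  ⟨m, fibPrefix m, fibPrefix_length m, isCover_self _⟩

lemma covFib_le_self (m : ℕ) : covFib m ≤ m :=
  Nat.sInf_le ⟨fibPrefix m, fibPrefix_length m, isCover_self _⟩

lemma covFib_le {C : List Bool} {m : ℕ} (h : IsCover C (fibPrefix m)) :
    covFib m ≤ C.length :=
  Nat.sInf_le ⟨C, rfl, h⟩

lemma covFib_mem (m : ℕ) :
    ∃ C : List Bool, C.length = covFib m ∧ IsCover C (fibPrefix m) :=
  Nat.sInf_mem (covFib_nonempty m)

lemma succ_chain {k : ℕ} : ∀ q : ℕ, ∃ i, Zg k i ∧ i ≤ q ∧ q < i + F (k+1) := by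
  intro q
  induction q with
  | zero => exact ⟨0, Zg.zero, le_rfl, by have := F_pos (k+1); omega⟩
  | succ n ih =>
    obtain ⟨i, hzi, hle, hlt⟩ := ih
    rcases Nat.lt_or_ge (n+1) (i + F (k+1)) with h | h
    · exact ⟨i, hzi, by omega, h⟩
    · obtain ⟨s, hsor, hspos, hzs⟩ := Zg_succ hzi
      have hsle : s ≤ F (k+1) := by
        rcases hsor with h' | h'
        · have : F k ≤ F (k+1) := F_mono (by omega)
          omega
        · omega
      exact ⟨i + s, hzs, by omega, by omega⟩

lemma cover_of {k c p : ℕ} (hk : 2 ≤ k) (h1 : F (k+1) ≤ c) (h2 : c + 2 ≤ F (k+2))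
    (hz : Zg k p) : IsCover (fibPrefix c) (fibPrefix (p + c)) := by
  have hoccp : occ c p := Zg_occ hz hk c h2
  have hOp : OccursAt (fibPrefix c) (fibPrefix (p + c)) p :=
    (occursAt_iff le_rfl).mpr hoccp
  refine ⟨⟨p, hOp⟩, ?_⟩
  intro q hq
  rw [fibPrefix_length] at hq
  have hc0 : 0 < c := by have := F_pos (k+1); omega
  rcases Nat.lt_or_ge q p with hqp | hqp
  · obtain ⟨i, hzi, hile, hilt⟩ := succ_chain (k := k) q
    have hocci : occ c i := Zg_occ hzi hk c h2
    refine ⟨i, (occursAt_iff (by omega)).mpr hocci, hile, by rw [fibPrefix_length]; omega⟩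
  · exact ⟨p, hOp, hqp, by rw [fibPrefix_length]; omega⟩

lemma cover_char {C : List Bool} {m : ℕ} (hC : IsCover C (fibPrefix m))
    (hlt : C.length < m) :
    ∃ k, 2 ≤ k ∧ F (k+1) ≤ C.length ∧ C.length + 2 ≤ F (k+2) ∧ Zg k (m - C.length) := by
  obtain ⟨-, hcov⟩ := hC
  set c := C.length with hc
  have hm0 : 0 < m := by omega
  -- occurrence at 0
  obtain ⟨i0, hocc0, hle0, hlt0⟩ := hcov 0 (by rw [fibPrefix_length]; omega)
  have hi0 : i0 = 0 := by omega
  subst hi0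
  have hc0 : 0 < c := by omega
  have hcm : c ≤ m := by omega
  have hCeq : C = fibPrefix c := by
    obtain ⟨hlen, heq⟩ := hocc0
    rw [← heq, List.drop_zero, ← hc, fibPrefix_take hcm]
  -- occurrence ending at m
  obtain ⟨i1, hocc1, hle1, hlt1⟩ := hcov (m-1) (by rw [fibPrefix_length]; omega)
  have hi1len := hocc1.1
  rw [fibPrefix_length, ← hc] at hi1len
  have hi1 : i1 = m - c := by omega
  rw [hCeq] at hocc1
  have hoccmc : occ c (m - c) := by
    rw [hi1] at hocc1
    exact (occursAt_iff (by omega)).mp hocc1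
  -- c ≥ 2
  have hc2 : 2 ≤ c := by
    by_contra hcon
    push_neg at hcon
    have hceq : c = 1 := by omega
    obtain ⟨i, hocci, hile, hilt⟩ := hcov 1 (by rw [fibPrefix_length]; omega)
    rw [hCeq] at hocci
    have hi : i = 1 := by omega
    subst hi
    have hocc1' : occ c 1 := (occursAt_iff (by rw [hceq]; omega)).mp hocci
    have := hocc1' 0 (by omega)
    exact absurd (by simpa using this) (by decide)
  -- the class of c
  obtain ⟨m0, hm01, hm02, hm03⟩ := exists_top (c+1) (by omega)
  have hm03' : 3 ≤ m0 := by
    by_contra hcon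
    push_neg at hcon
    have : F (m0+1) ≤ F 3 := F_mono (by omega)
    have : F 3 = 3 := rfl
    omega
  obtain ⟨k, rfl⟩ : ∃ k, m0 = k + 1 := ⟨m0 - 1, by omega⟩
  have hk2 : 2 ≤ k := by omega
  refine ⟨k, hk2, ?_, ?_, ?_⟩
  · -- F (k+1) ≤ c : by contradiction
    by_contra hcon
    push_neg at hcon
    have hceq : c + 1 = F (k+1) := by omega
    obtain ⟨i, hocci, hile, hilt⟩ := hcov c (by rw [fibPrefix_length]; omega)
    rw [hCeq] at hocci
    have hilen := hocci.1
    rw [fibPrefix_length, fibPrefix_length] at hilen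
    have hipos : 0 < i := by omega
    have hocci' : occ c i := (occursAt_iff (by omega)).mp hocci
    have hzi : Zg k i := occ_Zg k hk2 c i hceq hocci'
    rcases Zg_pos hzi with h | h
    · omega
    · omega
  · -- c + 2 ≤ F (k+2)
    have : F (k+1+1) = F (k+2) := rfl
    omega
  · -- Zg k (m - c)
    have hceq : F (k+1) - 1 + 1 = F (k+1) := by have := F_pos (k+1); omega
    have hle : F (k+1) - 1 ≤ c := by omega
    exact occ_Zg k hk2 (F (k+1) - 1) (m - c) hceq (occ_mono hoccmc hle)
lemma claim_min : ∀ k, 2 ≤ k → ∀ p c, Zg k p → F (k+1) ≤ c → c + 2 ≤ F (k+2) →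
    ∃ j t, 2 ≤ j ∧ t + 2 * F j = p + c + 1 ∧ Zg j t ∧ 2 * F j ≤ c + 1 := by
  intro k
  induction k using Nat.strong_induction_on with
  | _ k ihk =>
    intro hk p c hz h1 h2
    rcases Nat.lt_trichotomy (c+1) (2 * F k) with hcc | hcc | hcc
    · -- c + 1 < 2 F k : recurse to class k - 2
      have hk4 : 4 ≤ k := by
        rcases Nat.lt_or_ge k 4 with hsm | hsm
        · interval_cases k
          · have e2 : F 2 = 2 := rfl
            have e3 : F (2+1) = 3 := rfl
            have e4 : F (2+2) = 5 := rfl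
            omega
          · have e4 : F (3+1) = 5 := rfl
            have e5 : F (3+2) = 8 := rfl
            have e3 : F 3 = 3 := rfl
            omega
        · exact hsm
      obtain ⟨k', rfl⟩ : ∃ k', k = k' + 2 := ⟨k - 2, by omega⟩
      have hadd : Zg (k'+1) (p + F (k'+2)) := Zg_add hz
      have hz' : Zg k' (p + F (k'+2)) := Zg_mono hadd (by omega)
      have e1 : F (k'+3) = F (k'+2) + F (k'+1) := F_add_two (k'+1)
      have e2 : F (k'+2+1) = F (k'+3) := rfl
      have e0 : F (k'+2+2) = F (k'+4) := rfl
      have e4 : F (k'+4) = F (k'+3) + F (k'+2) := F_add_two (k'+2)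
      obtain ⟨j, t, hj2, heq, hzt, hle⟩ := ihk k' (by omega) (by omega) (p + F (k'+2))
        (c - F (k'+2)) hz' (by omega) (by omega)
      exact ⟨j, t, hj2, by omega, hzt, by omega⟩
    · exact ⟨k, p, hk, by omega, hz, by omega⟩
    · -- c + 1 > 2 F k : recurse to class k - 1
      have hk3 : 3 ≤ k := by
        rcases Nat.lt_or_ge k 3 with hsm | hsm
        · interval_cases k
          have e2 : F 2 = 2 := rfl
          have e3 : F (2+1) = 3 := rfl
          have e4 : F (2+2) = 5 := rfl
          omega
        · exact hsm
      obtain ⟨k', rfl⟩ : ∃ k', k = k' + 1 := ⟨k - 1, by omega⟩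
      have hz' : Zg k' (p + F (k'+1)) := Zg_add hz
      have e1 : F (k'+2) = F (k'+1) + F k' := F_add_two k'
      have e2 : F (k'+1+1) = F (k'+2) := rfl
      have e0 : F (k'+1+2) = F (k'+3) := rfl
      have e4 : F (k'+3) = F (k'+2) + F (k'+1) := F_add_two (k'+1)
      obtain ⟨j, t, hj2, heq, hzt, hle⟩ := ihk k' (by omega) (by omega) (p + F (k'+1))
        (c - F (k'+1)) hz' (by omega) (by omega)
      exact ⟨j, t, hj2, by omega, hzt, by omega⟩

lemma two_F_bounds {j : ℕ} (hj : 2 ≤ j) : F (j+1) + 1 ≤ 2 * F j ∧ 2 * F j + 1 ≤ F (j+2) := by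
  obtain ⟨i, rfl⟩ : ∃ i, j = i + 2 := ⟨j - 2, by omega⟩
  have e1 : F (i+3) = F (i+2) + F (i+1) := F_add_two (i+1)
  have e2 : F (i+2) = F (i+1) + F i := F_add_two i
  have e3 : F (i+4) = F (i+3) + F (i+2) := F_add_two (i+2)
  have e4 : F (i+2+1) = F (i+3) := rfl
  have e5 : F (i+2+2) = F (i+4) := rfl
  have := F_pos i
  have := F_pos (i+1)
  omega

lemma covFib_odd {m : ℕ} (h : covFib m < m) : ∃ r, covFib m = 2 * r + 1 := by
  obtain ⟨C, hlen, hcov⟩ := covFib_mem m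
  have hchar := cover_char hcov (by omega)
  rw [hlen] at hchar
  obtain ⟨k, hk2, h1, h2, hz⟩ := hchar
  obtain ⟨j, t, hj2, heq, hzt, hle⟩ := claim_min k hk2 (m - covFib m) (covFib m) hz h1 h2
  have hFj := F_pos j
  obtain ⟨hb1, hb2⟩ := two_F_bounds hj2
  have hcover : IsCover (fibPrefix (2 * F j - 1)) (fibPrefix (t + (2 * F j - 1))) :=
    cover_of hj2 (by omega) (by omega) hzt
  have hmt : t + (2 * F j - 1) = m := by omega
  rw [hmt] at hcover
  have hle2 : covFib m ≤ 2 * F j - 1 := by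
    have := covFib_le hcover
    rwa [fibPrefix_length] at this
  have hge2 : 2 * F j - 1 ≤ covFib m := by omega
  exact ⟨F j - 1, by omega⟩
lemma single_part {k m : ℕ} (hk : k ≤ m) : Zg k (F (m+1)) := by
  have h : Zg k (F (m+1) + 0) := Zg.cons m 0 hk (F_pos m) Zg.zero
  simpa using h

lemma bclaim : ∀ n : ℕ, Zg 2 (n+2) ∨ Zg 2 (n+3) ∨ Zg 3 n ∨ Zg 3 (n+1) := by
  intro n
  induction n using Nat.strong_induction_on with
  | _ n ih =>
    rcases Nat.lt_or_ge n 5 with h5 | h5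
    · interval_cases n
      · right; left
        have h := single_part (k := 2) (m := 2) le_rfl
        have e : F (2+1) = 3 := rfl
        rw [e] at h
        exact h
      · left
        have h := single_part (k := 2) (m := 2) le_rfl
        have e : F (2+1) = 3 := rfl
        rw [e] at h
        exact h
      · right; left
        have h := single_part (k := 2) (m := 3) (by omega)
        have e : F (3+1) = 5 := rfl
        rw [e] at h
        exact h
      · left
        have h := single_part (k := 2) (m := 3) (by omega)
        have e : F (3+1) = 5 := rfl
        rw [e] at h
        exact h
      · right; right; right
        have h := single_part (k := 3) (m := 3) le_rfl
        have e : F (3+1) = 5 := rfl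
        rw [e] at h
        exact h
    · obtain ⟨t, ht1, ht2, ht3⟩ := exists_top n (by omega)
      have ht4 : 4 ≤ t := by
        by_contra hcon
        push_neg at hcon
        have : F (t+1) ≤ F 4 := F_mono (by omega)
        have : F 4 = 5 := rfl
        omega
      obtain ⟨t', rfl⟩ : ∃ t', t = t' + 1 := ⟨t - 1, by omega⟩
      have e1 : F (t'+1+1) = F (t'+2) := rfl
      have e2 : F (t'+2) = F (t'+1) + F t' := F_add_two t'
      rcases Nat.lt_or_ge (n+3) (F (t'+2)) with hb | hb
      · -- recurse
        have hFpos := F_pos (t'+1)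
        have hrec := ih (n - F (t'+1)) (by omega)
        rcases hrec with h | h | h | h
        · left
          have hh : Zg 2 (F (t'+1) + (n - F (t'+1) + 2)) :=
            Zg.cons t' _ (by omega) (by omega) h
          rwa [show F (t'+1) + (n - F (t'+1) + 2) = n + 2 from by omega] at hh
        · right; left
          have hh : Zg 2 (F (t'+1) + (n - F (t'+1) + 3)) :=
            Zg.cons t' _ (by omega) (by omega) h
          rwa [show F (t'+1) + (n - F (t'+1) + 3) = n + 3 from by omega] at hh
        · right; right; left
          have hh : Zg 3 (F (t'+1) + (n - F (t'+1))) :=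
            Zg.cons t' _ (by omega) (by omega) h
          rwa [show F (t'+1) + (n - F (t'+1)) = n from by omega] at hh
        · right; right; right
          have hh : Zg 3 (F (t'+1) + (n - F (t'+1) + 1)) :=
            Zg.cons t' _ (by omega) (by omega) h
          rwa [show F (t'+1) + (n - F (t'+1) + 1) = n + 1 from by omega] at hh
      · -- boundary : n < F (t'+2) ≤ n + 3
        rcases (show F (t'+2) = n + 1 ∨ F (t'+2) = n + 2 ∨ F (t'+2) = n + 3 from by omega)
          with hv | hv | hv
        · right; right; right
          have h := single_part (k := 3) (m := t'+1) (by omega)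
          rwa [hv] at h
        · left
          have h := single_part (k := 2) (m := t'+1) (by omega)
          rwa [hv] at h
        · right; left
          have h := single_part (k := 2) (m := t'+1) (by omega)
          rwa [hv] at h

lemma cover3 {p : ℕ} (hz : Zg 2 p) : IsCover (fibPrefix 3) (fibPrefix (p + 3)) :=
  cover_of (k := 2) le_rfl (by have e : F (2+1) = 3 := rfl; omega)
    (by have e : F (2+2) = 5 := rfl; omega) hz

lemma cover5 {p : ℕ} (hz : Zg 3 p) : IsCover (fibPrefix 5) (fibPrefix (p + 5)) :=
  cover_of (k := 3) (by omega) (by have e : F (3+1) = 5 := rfl; omega)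
    (by have e : F (3+2) = 8 := rfl; omega) hz

lemma pair (m : ℕ) (hm : 5 ≤ m) :
    (∃ C : List Bool, IsCover C (fibPrefix m) ∧ C.length < m) ∨
    (∃ C : List Bool, IsCover C (fibPrefix (m+1)) ∧ C.length < m+1) := by
  rcases Nat.eq_or_lt_of_le hm with h5 | h6
  · right
    have hz : Zg 2 3 := by
      have h := single_part (k := 2) (m := 2) le_rfl
      have e : F (2+1) = 3 := rfl
      rwa [e] at h
    have hc := cover3 hz
    refine ⟨fibPrefix 3, ?_, by rw [fibPrefix_length]; omega⟩
    rwa [show (3:ℕ) + 3 = m + 1 from by omega] at hc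
  · have hm6 : 6 ≤ m := h6
    rcases bclaim (m - 5) with h | h | h | h
    · left
      refine ⟨fibPrefix 3, ?_, by rw [fibPrefix_length]; omega⟩
      have hc := cover3 h
      rwa [show m - 5 + 2 + 3 = m from by omega] at hc
    · right
      refine ⟨fibPrefix 3, ?_, by rw [fibPrefix_length]; omega⟩
      have hc := cover3 h
      rwa [show m - 5 + 3 + 3 = m + 1 from by omega] at hc
    · left
      refine ⟨fibPrefix 5, ?_, by rw [fibPrefix_length]; omega⟩
      have hc := cover5 h
      rwa [show m - 5 + 5 = m from by omega] at hc
    · right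
      refine ⟨fibPrefix 5, ?_, by rw [fibPrefix_length]; omega⟩
      have hc := cover5 h
      rwa [show m - 5 + 1 + 5 = m + 1 from by omega] at hc

/-- For every `ℓ ≥ 5`, `Cov_Fib[ℓ+1] ≠ Cov_Fib[ℓ] + 1`. -/
theorem stmt11 (ℓ : ℕ) (hℓ : 5 ≤ ℓ) : covFib (ℓ + 1) ≠ covFib ℓ + 1 := by
  intro hcontra
  have hle1 : covFib (ℓ + 1) ≤ ℓ + 1 := covFib_le_self _
  rcases Nat.lt_or_ge (covFib (ℓ + 1)) (ℓ + 1) with hlt | hge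
  · have hlt2 : covFib ℓ < ℓ := by omega
    obtain ⟨x, hx⟩ := covFib_odd hlt
    obtain ⟨y, hy⟩ := covFib_odd hlt2
    omega
  · have heq1 : covFib (ℓ + 1) = ℓ + 1 := by omega
    have heq2 : covFib ℓ = ℓ := by omega
    rcases pair ℓ hℓ with ⟨C, hc, hlen⟩ | ⟨C, hc, hlen⟩
    · have := covFib_le hc
      omega
    · have := covFib_le hc
      omega
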